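/- If K and L are bifix-free regular languages with m quotients and n quotients respectively, m, n ≥ 2, then the concatenation KL has at most m + n − 2 distinct quotients, and this bound is attained by the unary subword-free languages {a^{m−2}} and {a^{n−2}}. -/

import Mathlib

def lq {α : Type*} (L : Set (List α)) (w : List α) : Set (List α) := {x | w ++ x ∈ L}

def PrefixFree {α : Type*} (L : Set (List α)) : Prop := ∀ u ∈ L, ∀ v ∈ L, u <+: v → u = v
def SuffixFree {α : Type*} (L : Set (List α)) : Prop := ∀ u ∈ L, ∀ v ∈ L, u <:+ v → u = v
def FactorFree {α : Type*} (L : Set (List α)) : Prop := ∀ u ∈ L, ∀ v ∈ L, u <:+: v → u = v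
def SubwordFree {α : Type*} (L : Set (List α)) : Prop := ∀ u ∈ L, ∀ v ∈ L, List.Sublist u v → u = v
def cat {α : Type*} (K L : Set (List α)) : Set (List α) :=
  {w | ∃ u ∈ K, ∃ v ∈ L, w = u ++ v}

-- auxiliary lemmas

lemma lq_nil {α : Type*} (L : Set (List α)) : lq L [] = L := by
  ext x; simp [lq]

lemma cat_empty_left {α : Type*} (L : Set (List α)) : cat (∅ : Set (List α)) L = ∅ := by
  ext x; simp [cat]

lemma cat_singleton_nil_left {α : Type*} (L : Set (List α)) :
    cat ({[]} : Set (List α)) L = L := by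
  ext x; simp [cat]

/-- a word of K has quotient {[]} when K is prefix-free -/
lemma lq_mem_prefixFree {α : Type*} {K : Set (List α)} (hK : PrefixFree K)
    {u : List α} (hu : u ∈ K) : lq K u = {[]} := by
  ext x
  constructor
  · intro hx
    have heq : u = u ++ x := hK u hu (u ++ x) hx ⟨x, rfl⟩
    have h2 : u ++ [] = u ++ x := by simpa using heq
    have hx0 : x = [] := (List.append_cancel_left h2).symm
    simp [hx0]
  · intro hx
    simp at hx
    subst hx
    simpa [lq] using hu

/-- quotient by a strict extension of a word of K is empty (K prefix-free) -/
lemma lq_dead {α : Type*} {K : Set (List α)} (hK : PrefixFree K)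
    {u : List α} (hu : u ∈ K) (a : α) : lq K (u ++ [a]) = ∅ := by
  ext x
  simp only [Set.mem_empty_iff_false, iff_false]
  intro hx
  have hx' : u ++ ([a] ++ x) ∈ K := by simpa [lq] using hx
  have := hK u hu (u ++ ([a] ++ x)) hx' ⟨[a] ++ x, rfl⟩
  have hl := congrArg List.length this
  simp at hl

/-- the key quotient formula case analysis -/
lemma quotient_cases {α : Type*} {K L : Set (List α)} (hKp : PrefixFree K) (w : List α) :
    lq (cat K L) w ∈
      ((fun A => cat A L) '' (Set.range (lq K) \ {∅, {[]}})) ∪ Set.range (lq L) ∪ {∅} := by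
  by_cases h : ∃ u, u <+: w ∧ u ∈ K
  · obtain ⟨u, ⟨v, hv⟩, huK⟩ := h
    -- quotient is lq L v
    have : lq (cat K L) w = lq L v := by
      ext x
      constructor
      · rintro ⟨u', hu', v', hv', heq⟩
        have h1 : u' <+: w ++ x := ⟨v', heq.symm⟩
        have h2 : u <+: w ++ x := ⟨v ++ x, by rw [← hv, List.append_assoc]⟩
        have : u' = u := by
          rcases List.prefix_or_prefix_of_prefix h1 h2 with hp | hp
          · exact hKp u' hu' u huK hp
          · exact (hKp u huK u' hu' hp).symm
        subst this
        have : u' ++ (v ++ x) = u' ++ v' := by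
          rw [← List.append_assoc, hv, heq]
        have : v ++ x = v' := List.append_cancel_left this
        simpa [lq, this] using hv'
      · intro hx
        exact ⟨u, huK, v ++ x, hx, by rw [← List.append_assoc, hv]⟩
    rw [this]
    exact Or.inl (Or.inr ⟨v, rfl⟩)
  · -- no prefix of w is in K: quotient is (lq K w) · L
    have hform : lq (cat K L) w = cat (lq K w) L := by
      ext x
      constructor
      · rintro ⟨u', hu', v', hv', heq⟩
        have h1 : u' <+: w ++ x := ⟨v', heq.symm⟩
        have h2 : w <+: w ++ x := ⟨x, rfl⟩
        rcases List.prefix_or_prefix_of_prefix h1 h2 with hp | hp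
        · exact absurd ⟨u', hp, hu'⟩ h
        · obtain ⟨t, ht⟩ := hp
          refine ⟨t, ?_, v', hv', ?_⟩
          · simpa [lq, ht] using hu'
          · rw [← ht] at heq
            rw [List.append_assoc] at heq
            exact List.append_cancel_left heq
      · rintro ⟨t, ht, v', hv', rfl⟩
        exact ⟨w ++ t, ht, v', hv', by rw [List.append_assoc]⟩
    rw [hform]
    by_cases he : lq K w = ∅
    · rw [he, cat_empty_left]
      exact Or.inr rfl
    · have hne : lq K w ≠ {[]} := by
        intro hc
        have : ([] : List α) ∈ lq K w := by rw [hc]; exact rfl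
        have hwK : w ∈ K := by simpa [lq] using this
        exact h ⟨w, ⟨[], by simp⟩, hwK⟩
      refine Or.inl (Or.inl ⟨lq K w, ⟨⟨w, rfl⟩, ?_⟩, rfl⟩)
      simp only [Set.mem_insert_iff, Set.mem_singleton_iff]
      tauto

-- facts about unary singleton languages

lemma unit_eq_of_length {u v : List Unit} (h : u.length = v.length) : u = v := by
  apply List.ext_getElem h
  intros; rfl

lemma lq_replicate (k : ℕ) (w : List Unit) :
    lq ({List.replicate k ()} : Set (List Unit)) w = {x | w.length + x.length = k} := by
  ext x
  simp only [lq, Set.mem_singleton_iff, Set.mem_setOf_eq]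
  constructor
  · intro hx
    have := congrArg List.length hx
    simpa using this
  · intro hx
    apply unit_eq_of_length
    simpa using hx

lemma range_lq_replicate (k : ℕ) :
    Set.range (lq ({List.replicate k ()} : Set (List Unit))) =
      (fun j => {x : List Unit | j + x.length = k}) '' Set.Iic (k + 1) := by
  ext S
  constructor
  · rintro ⟨w, rfl⟩
    rw [lq_replicate]
    by_cases h : w.length ≤ k + 1
    · exact ⟨w.length, h, rfl⟩
    · refine ⟨k + 1, Set.mem_Iic.2 le_rfl, ?_⟩
      ext x
      simp only [Set.mem_setOf_eq]
      omega
  · rintro ⟨j, _, rfl⟩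
    refine ⟨List.replicate j (), ?_⟩
    rw [lq_replicate]
    simp

lemma injOn_replicate_quotients (k : ℕ) :
    Set.InjOn (fun j => {x : List Unit | j + x.length = k}) (Set.Iic (k + 1)) := by
  intro i hi j hj hij
  simp only [Set.mem_Iic] at hi hj
  change {x : List Unit | i + x.length = k} = {x : List Unit | j + x.length = k} at hij
  by_cases h : i ≤ k
  · have : List.replicate (k - i) () ∈ {x : List Unit | i + x.length = k} := by
      simp; omega
    rw [hij] at this
    simp at this
    omega
  · by_cases h' : j ≤ k
    · have : List.replicate (k - j) () ∈ {x : List Unit | j + x.length = k} := by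
        simp; omega
      rw [← hij] at this
      simp at this
      omega
    · omega

lemma ncard_range_lq_replicate (k : ℕ) :
    (Set.range (lq ({List.replicate k ()} : Set (List Unit)))).ncard = k + 2 := by
  rw [range_lq_replicate]
  rw [Set.ncard_image_of_injOn (injOn_replicate_quotients k)]
  rw [← Finset.coe_Iic, Set.ncard_coe_finset]
  simp

lemma cat_replicate (p q : ℕ) :
    cat ({List.replicate p ()} : Set (List Unit)) ({List.replicate q ()} : Set (List Unit)) =
      {List.replicate (p + q) ()} := by
  ext w
  simp only [cat, Set.mem_singleton_iff, Set.mem_setOf_eq]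
  constructor
  · rintro ⟨u, rfl, v, rfl, rfl⟩
    rw [← List.replicate_add]
  · rintro rfl
    exact ⟨_, rfl, _, rfl, by rw [← List.replicate_add]⟩

theorem bifixFree_product_quotient_complexity (m n : ℕ) (hm : 2 ≤ m) (hn : 2 ≤ n) :
    (∀ {α : Type} (K L : Set (List α)),
      PrefixFree K → SuffixFree K → PrefixFree L → SuffixFree L →
      (Set.range (lq K)).Finite → (Set.range (lq L)).Finite →
      (Set.range (lq K)).ncard = m → (Set.range (lq L)).ncard = n →
      (Set.range (lq (cat K L))).Finite ∧
        (Set.range (lq (cat K L))).ncard ≤ m + n - 2) ∧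
    (SubwordFree ({List.replicate (m - 2) ()} : Set (List Unit)) ∧
     SubwordFree ({List.replicate (n - 2) ()} : Set (List Unit)) ∧
     (Set.range (lq ({List.replicate (m - 2) ()} : Set (List Unit)))).ncard = m ∧
     (Set.range (lq ({List.replicate (n - 2) ()} : Set (List Unit)))).ncard = n ∧
     (Set.range (lq (cat ({List.replicate (m - 2) ()} : Set (List Unit))
        ({List.replicate (n - 2) ()} : Set (List Unit))))).ncard = m + n - 2) := by
  constructor
  · intro α K L hKp _ hLp _ hKfin hLfin hKm hLn
    -- α is nonempty
    have hα : Nonempty α := by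
      rcases isEmpty_or_nonempty α with he | h
      · exfalso
        have hall : ∀ w : List α, w = [] := by
          intro w
          cases w with
          | nil => rfl
          | cons a _ => exact (he.false a).elim
        have : Set.range (lq K) = {K} := by
          ext S
          constructor
          · rintro ⟨w, rfl⟩
            rw [hall w, lq_nil]; rfl
          · rintro rfl
            exact ⟨[], lq_nil _⟩
        rw [this] at hKm
        simp at hKm
        omega
      · exact h
    obtain ⟨a⟩ := hα
    -- K and L are nonempty
    have hKne : K.Nonempty := by
      by_contra hc
      rw [Set.not_nonempty_iff_eq_empty] at hc
      subst hc
      have : Set.range (lq (∅ : Set (List α))) = {∅} := by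
        ext S
        constructor
        · rintro ⟨w, rfl⟩
          ext x; simp [lq]
        · rintro rfl
          exact ⟨[], by ext x; simp [lq]⟩
      rw [this] at hKm
      simp at hKm
      omega
    have hLne : L.Nonempty := by
      by_contra hc
      rw [Set.not_nonempty_iff_eq_empty] at hc
      subst hc
      have : Set.range (lq (∅ : Set (List α))) = {∅} := by
        ext S
        constructor
        · rintro ⟨w, rfl⟩
          ext x; simp [lq]
        · rintro rfl
          exact ⟨[], by ext x; simp [lq]⟩
      rw [this] at hLn
      simp at hLn
      omega
    obtain ⟨u₀, hu₀⟩ := hKne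
    obtain ⟨l₀, hl₀⟩ := hLne
    -- ∅ and {[]} are quotients of K, ∅ is quotient of L
    have hKempty : (∅ : Set (List α)) ∈ Set.range (lq K) := ⟨u₀ ++ [a], lq_dead hKp hu₀ a⟩
    have hKeps : ({[]} : Set (List α)) ∈ Set.range (lq K) := ⟨u₀, lq_mem_prefixFree hKp hu₀⟩
    have hLempty : (∅ : Set (List α)) ∈ Set.range (lq L) := ⟨l₀ ++ [a], lq_dead hLp hl₀ a⟩
    -- the covering set
    set S₁ := (fun A => cat A L) '' (Set.range (lq K) \ {∅, {[]}}) with hS₁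
    have hsub : Set.range (lq (cat K L)) ⊆ S₁ ∪ Set.range (lq L) := by
      rintro Q ⟨w, rfl⟩
      have := quotient_cases hKp (L := L) w
      rcases this with (h | h) | h
      · exact Or.inl h
      · exact Or.inr h
      · simp only [Set.mem_singleton_iff] at h
        rw [h]
        exact Or.inr hLempty
    have hS₁fin : S₁.Finite := (hKfin.diff.image _)
    have hfin : (S₁ ∪ Set.range (lq L)).Finite := hS₁fin.union hLfin
    refine ⟨hfin.subset hsub, ?_⟩
    have h1 : (Set.range (lq (cat K L))).ncard ≤ (S₁ ∪ Set.range (lq L)).ncard :=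
      Set.ncard_le_ncard hsub hfin
    have h2 : (S₁ ∪ Set.range (lq L)).ncard ≤ S₁.ncard + (Set.range (lq L)).ncard :=
      Set.ncard_union_le _ _
    have h3 : S₁.ncard ≤ (Set.range (lq K) \ {∅, {[]}}).ncard :=
      Set.ncard_image_le hKfin.diff
    have hpair : ({∅, {[]}} : Set (Set (List α))) ⊆ Set.range (lq K) := by
      rintro X hX
      rcases hX with rfl | hX
      · exact hKempty
      · simp only [Set.mem_singleton_iff] at hX
        rw [hX]; exact hKeps
    have hpairc : ({∅, {[]}} : Set (Set (List α))).ncard = 2 := by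
      rw [Set.ncard_pair]
      intro hc
      have : ([] : List α) ∈ ({[]} : Set (List α)) := rfl
      rw [← hc] at this
      exact this
    have h4 : (Set.range (lq K) \ {∅, {[]}}).ncard = m - 2 := by
      rw [Set.ncard_diff hpair, hKm, hpairc]
    omega
  · refine ⟨?_, ?_, ?_, ?_, ?_⟩
    · rintro u rfl v rfl _; rfl
    · rintro u rfl v rfl _; rfl
    · rw [ncard_range_lq_replicate]; omega
    · rw [ncard_range_lq_replicate]; omega
    · rw [cat_replicate, ncard_range_lq_replicate]; omega
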